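/- arXiv:0909.2557 — 2 statements merged into one kernel-verified Lean document; each statement's English description precedes it below -/
import Mathlib

section
/- Let γ > 1 and c₀ > 0 be constants, let b₁ = √(2c₀/(γ+1)), and let N > 1 be a real number. Then there exists a unique b₀ with 0 < b₀ < b₁ satisfying the algebraic equation b₀^{γ−1} (c₀ − ((γ−1)/2) b₀²) N^{γ−1} = b₁^{γ+1}. -/
/-!
The map `b ↦ b^(γ-1) (c₀ - (γ-1)/2 b²)` has derivative
`(γ-1) b^(γ-2) (c₀ - (γ+1)/2 b²)`, positive on the subsonic range `(0, b₁)`, and it runs from `0`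
at `b = 0` to `b₁^(γ+1)` at the sonic speed. Since `N^(γ-1) > 1`, the target `b₁^(γ+1) / N^(γ-1)`
lies strictly between these values, and the intermediate value theorem together with strict
monotonicity gives exactly one solution.
-/

open Set

theorem existsUnique_mem_Ioo_of_strictMonoOn {f : ℝ → ℝ} {a b y : ℝ} (hab : a ≤ b)
    (hcont : ContinuousOn f (Icc a b)) (hmono : StrictMonoOn f (Icc a b))
    (hy : y ∈ Ioo (f a) (f b)) : ∃! x, x ∈ Ioo a b ∧ f x = y := by
  obtain ⟨x, hx, hfx⟩ := intermediate_value_Ioo hab hcont hy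
  refine ⟨x, ⟨hx, hfx⟩, ?_⟩
  rintro x' ⟨hx', hfx'⟩
  exact hmono.injOn (Ioo_subset_Icc_self hx') (Ioo_subset_Icc_self hx) (hfx'.trans hfx.symm)

/-- With the Bernoulli law `(γ-1)/2 b² + ρ^(γ-1) = c₀` this is `(ρ b)^(γ-1)`. -/
noncomputable def massFluxPow (γ c₀ b : ℝ) : ℝ :=
  b ^ (γ - 1) * (c₀ - (γ - 1) / 2 * b ^ 2)

namespace massFluxPow

variable {γ c₀ : ℝ}

theorem continuous (hγ : 1 ≤ γ) : Continuous (massFluxPow γ c₀) :=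
  (Real.continuous_rpow_const (by linarith)).mul (by fun_prop)

theorem apply_zero (hγ : γ ≠ 1) : massFluxPow γ c₀ 0 = 0 := by
  simp [massFluxPow, Real.zero_rpow (sub_ne_zero.2 hγ)]

theorem hasDerivAt {x : ℝ} (hx : 0 < x) :
    HasDerivAt (massFluxPow γ c₀) ((γ - 1) * x ^ (γ - 2) * (c₀ - (γ + 1) / 2 * x ^ 2)) x := by
  have hpow : HasDerivAt (fun b : ℝ => b ^ (γ - 1)) ((γ - 1) * x ^ (γ - 2)) x :=
    (Real.hasDerivAt_rpow_const (Or.inl hx.ne')).congr_deriv (by ring_nf)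
  have hbern : HasDerivAt (fun b : ℝ => c₀ - (γ - 1) / 2 * b ^ 2) (-((γ - 1) * x)) x :=
    (((hasDerivAt_pow 2 x).const_mul ((γ - 1) / 2)).const_sub c₀).congr_deriv (by push_cast; ring)
  have hx_mul : x ^ (γ - 2) * x = x ^ (γ - 1) := by
    rw [← Real.rpow_add_one hx.ne']; ring_nf
  have hx_sq : x ^ (γ - 2) * x ^ 2 = x ^ (γ - 1) * x := by
    rw [hx_mul.symm, mul_assoc, ← sq]
  refine (hpow.mul hbern).congr_deriv ?_
  linear_combination (γ - 1) * hx_sq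

theorem strictMonoOn (hγ : 1 < γ) :
    StrictMonoOn (massFluxPow γ c₀) (Icc 0 (√(2 * c₀ / (γ + 1)))) := by
  refine strictMonoOn_of_deriv_pos (convex_Icc _ _) (continuous hγ.le).continuousOn ?_
  rw [interior_Icc]
  rintro x ⟨hx, hx_sonic⟩
  rw [(hasDerivAt hx).deriv]
  have hsubsonic : x ^ 2 < 2 * c₀ / (γ + 1) := (Real.lt_sqrt hx.le).1 hx_sonic
  have hsound : 0 < c₀ - (γ + 1) / 2 * x ^ 2 := by
    rw [lt_div_iff₀ (by linarith)] at hsubsonic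
    linarith
  have := Real.rpow_pos_of_pos hx (γ - 2)
  have : 0 < γ - 1 := by linarith
  positivity

theorem apply_sonic (hγ : 1 < γ) (hc₀ : 0 ≤ c₀) :
    massFluxPow γ c₀ √(2 * c₀ / (γ + 1)) = √(2 * c₀ / (γ + 1)) ^ (γ + 1) := by
  have hγ₁ : 0 < γ + 1 := by linarith
  set b₁ := √(2 * c₀ / (γ + 1))
  have hsq : b₁ ^ 2 = 2 * c₀ / (γ + 1) := Real.sq_sqrt (by positivity)
  have hsound : c₀ - (γ - 1) / 2 * b₁ ^ 2 = b₁ ^ 2 := by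
    rw [hsq]; field_simp; ring
  rw [massFluxPow, hsound, show γ + 1 = (γ - 1) + 2 by ring,
    Real.rpow_add' (Real.sqrt_nonneg _) (by linarith), Real.rpow_two]

end massFluxPow

/-- For γ > 1, c₀ > 0, b₁ = √(2c₀/(γ+1)) and N > 1, there exists a unique
b₀ with 0 < b₀ < b₁ satisfying b₀^(γ−1) (c₀ − ((γ−1)/2) b₀²) N^(γ−1) = b₁^(γ+1). -/
theorem unique_entry_speed (γ c₀ N : ℝ) (hγ : 1 < γ) (hc₀ : 0 < c₀) (hN : 1 < N)
    (b₁ : ℝ) (hb₁ : b₁ = Real.sqrt (2 * c₀ / (γ + 1))) :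
    ∃! b₀ : ℝ, 0 < b₀ ∧ b₀ < b₁ ∧
      b₀ ^ (γ - 1) * (c₀ - (γ - 1) / 2 * b₀ ^ 2) * N ^ (γ - 1) = b₁ ^ (γ + 1) := by
  have hγ₁ : 0 < γ + 1 := by linarith
  have hb₁_pos : 0 < b₁ := hb₁ ▸ Real.sqrt_pos.2 (by positivity)
  have hNpow : 1 < N ^ (γ - 1) := Real.one_lt_rpow hN (by linarith)
  have htarget : b₁ ^ (γ + 1) / N ^ (γ - 1) ∈
      Ioo (massFluxPow γ c₀ 0) (massFluxPow γ c₀ b₁) := by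
    rw [massFluxPow.apply_zero hγ.ne', hb₁, massFluxPow.apply_sonic hγ hc₀.le, ← hb₁]
    have := Real.rpow_pos_of_pos hb₁_pos (γ + 1)
    exact ⟨by positivity, div_lt_self this hNpow⟩
  subst hb₁
  have hunique := existsUnique_mem_Ioo_of_strictMonoOn hb₁_pos.le
    (massFluxPow.continuous hγ.le).continuousOn
    (massFluxPow.strictMonoOn hγ) htarget
  refine (existsUnique_congr fun b₀ => ?_).1 hunique
  rw [eq_div_iff (by linarith), mem_Ioo, and_assoc, massFluxPow]
end

section
/- Let γ > 1, c₀ > 0, and let n : [0,1] → ℝ be a positive smooth function with n''(t) > 0 on [0,1], n'(t) < 0 for t ∈ (0,1), n'(1) = 0, and n(1) = 1. Set b₁ = √(2c₀/(γ+1)), and let b₀ ∈ (0, b₁) be the unique solution of b₀^{γ−1} (c₀ − ((γ−1)/2) b₀²) n(0)^{γ−1} = b₁^{γ+1}. Define ρ(s) = ((c₀ − ((γ−1)/2) s²)/γ)^{1/(γ−1)} for 0 ≤ s ≤ b₁. Then there exists a function u : [0,1] → ℝ, continuously differentiable on [0,1], such that: u(0) = b₀, u(1) = b₁; the mass flux n(x)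 ρ(u(x)) u(x) is constant on [0,1]; u'(x) > 0 for all x ∈ [0,1] (the flow always accelerates); and u(x)² < c₀ − ((γ−1)/2) u(x)² for all x ∈ [0,1) (the flow is subsonic), with equality u(1)² = c₀ − ((γ−1)/2) u(1)² at x = 1 (the flow is sonic at the exit). -/
open Set

open Filter Topology

set_option maxHeartbeats 1000000

/-- Existence of the symmetric subsonic–sonic accelerating flow in the
convergent approximate nozzle. -/
theorem exists_symmetric_subsonic_sonic_flow
    (γ c₀ : ℝ) (hγ : 1 < γ) (hc₀ : 0 < c₀)
    (n : ℝ → ℝ) (hn : ContDiff ℝ (⊤ : ℕ∞) n)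
    (hnpos : ∀ t ∈ Icc (0:ℝ) 1, 0 < n t)
    (hn'' : ∀ t ∈ Icc (0:ℝ) 1, 0 < deriv (deriv n) t)
    (hn' : ∀ t ∈ Ioo (0:ℝ) 1, deriv n t < 0)
    (hn'1 : deriv n 1 = 0) (hn1 : n 1 = 1)
    (b₁ : ℝ) (hb₁ : b₁ = Real.sqrt (2 * c₀ / (γ + 1)))
    (b₀ : ℝ) (hb₀pos : 0 < b₀) (hb₀lt : b₀ < b₁)
    (hb₀eq : b₀ ^ (γ - 1) * (c₀ - (γ - 1) / 2 * b₀ ^ 2) * (n 0) ^ (γ - 1) = b₁ ^ (γ + 1))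
    (ρ : ℝ → ℝ) (hρ : ∀ s, 0 ≤ s → s ≤ b₁ → ρ s = ((c₀ - (γ - 1) / 2 * s ^ 2) / γ) ^ (1 / (γ - 1))) :
    ∃ u : ℝ → ℝ, ContDiffOn ℝ 1 u (Icc 0 1) ∧
      u 0 = b₀ ∧ u 1 = b₁ ∧
      (∀ x ∈ Icc (0:ℝ) 1, n x * ρ (u x) * u x = n 0 * ρ b₀ * b₀) ∧
      (∀ x ∈ Icc (0:ℝ) 1, 0 < derivWithin u (Icc 0 1) x) ∧
      (∀ x ∈ Ico (0:ℝ) 1, (u x) ^ 2 < c₀ - (γ - 1) / 2 * (u x) ^ 2) ∧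
      (u 1) ^ 2 = c₀ - (γ - 1) / 2 * (u 1) ^ 2 := by
  have hγ1 : (0:ℝ) < γ - 1 := by linarith
  have hγp1 : (0:ℝ) < γ + 1 := by linarith
  have hγ0 : (0:ℝ) < γ := by linarith
  have hγne : γ - 1 ≠ 0 := ne_of_gt hγ1
  have hb₁pos : 0 < b₁ := by
    rw [hb₁]; exact Real.sqrt_pos.mpr (by positivity)
  have hb₁sq : b₁ ^ 2 = 2 * c₀ / (γ + 1) := by
    rw [hb₁, Real.sq_sqrt (by positivity)]
  have hsonic : c₀ - (γ - 1) / 2 * b₁ ^ 2 = b₁ ^ 2 := by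
    field_simp at hb₁sq; nlinarith [hb₁sq]
  have hcsum : c₀ = (γ + 1) / 2 * b₁ ^ 2 := by linarith
  set K : ℝ → ℝ := fun s => s ^ (γ - 1) * (c₀ - (γ - 1) / 2 * s ^ 2) with hKdef
  set c₁ : ℝ := b₁ ^ (γ + 1) with hc₁def
  set P : ℝ → ℝ := fun x => c₁ * n x ^ (-(γ - 1)) with hPdef
  set Kd : ℝ → ℝ := fun s => (γ - 1) * (γ + 1) / 2 * s ^ (γ - 2) * (b₁ ^ 2 - s ^ 2) with hKddef
  set Pd : ℝ → ℝ := fun x => c₁ * (-(γ - 1) * n x ^ (-(γ - 1) - 1) * deriv n x) with hPddef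
  have hc₁pos : 0 < c₁ := Real.rpow_pos_of_pos hb₁pos _
  have hKb₁ : K b₁ = c₁ := by
    rw [hKdef, hc₁def]
    show b₁ ^ (γ - 1) * (c₀ - (γ - 1) / 2 * b₁ ^ 2) = b₁ ^ (γ + 1)
    rw [hsonic, ← Real.rpow_natCast b₁ 2, ← Real.rpow_add hb₁pos]
    norm_num
    rw [show γ - 1 + 2 = γ + 1 by ring]
  have hb₀mem : b₀ ∈ Icc 0 b₁ := ⟨hb₀pos.le, hb₀lt.le⟩
  have hKb₀ : K b₀ * n 0 ^ (γ - 1) = c₁ := hb₀eq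
  have hKcont : Continuous K := by
    rw [hKdef]
    apply Continuous.mul ?_ (continuous_const.sub (continuous_const.mul (continuous_pow 2)))
    rw [continuous_iff_continuousAt]
    intro s
    exact Real.continuousAt_rpow_const s _ (Or.inr hγ1.le)
  have hK0 : K 0 = 0 := by
    rw [hKdef]; show (0:ℝ) ^ (γ-1) * _ = 0
    rw [Real.zero_rpow hγne, zero_mul]
  have hKderiv : ∀ s : ℝ, 0 < s → HasDerivAt K (Kd s) s := by
    intro s hs
    have h1 : HasDerivAt (fun s : ℝ => s ^ (γ - 1)) ((γ - 1) * s ^ (γ - 1 - 1)) s :=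
      Real.hasDerivAt_rpow_const (Or.inl hs.ne')
    have h2 : HasDerivAt (fun s : ℝ => c₀ - (γ - 1) / 2 * s ^ 2)
        (-((γ - 1) / 2 * (2 * s))) s := by
      simpa using ((hasDerivAt_pow 2 s).const_mul ((γ - 1)/2)).const_sub c₀
    have h := h1.mul h2
    convert h using 1 <;> try rfl
    have e2 : s ^ (γ - 1) = s ^ (γ - 2) * s := by
      rw [← Real.rpow_add_one hs.ne' (γ - 2), show γ - 2 + 1 = γ - 1 by ring]
    rw [hKddef, show γ - 1 - 1 = γ - 2 by ring, e2, hcsum]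
    ring
  have hKd_pos : ∀ s : ℝ, 0 < s → s < b₁ → 0 < Kd s := by
    intro s hs hsb
    rw [hKddef]
    have h1 : 0 < s ^ (γ - 2) := Real.rpow_pos_of_pos hs _
    have h2 : s ^ 2 < b₁ ^ 2 := by nlinarith
    have : (0:ℝ) < b₁ ^ 2 - s ^ 2 := by linarith
    positivity
  have hKmono : StrictMonoOn K (Icc 0 b₁) := by
    apply strictMonoOn_of_deriv_pos (convex_Icc 0 b₁) hKcont.continuousOn
    intro s hs
    rw [interior_Icc] at hs
    rw [(hKderiv s hs.1).deriv]
    exact hKd_pos s hs.1 hs.2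
  -- n-side facts
  have hninf : ContDiff ℝ (⊤ : ℕ∞) n := hn.of_le (by simp)
  have hndiff : Differentiable ℝ n := hn.differentiable (by simp)
  have hncont : Continuous n := hndiff.continuous
  have hdn : Differentiable ℝ (deriv n) :=
    (contDiff_infty_iff_deriv.mp hninf).2.differentiable (by simp)
  have hdncont : Continuous (deriv n) := hdn.continuous
  have hdnmono : StrictMonoOn (deriv n) (Icc 0 1) := by
    apply strictMonoOn_of_deriv_pos (convex_Icc 0 1) hdncont.continuousOn
    intro t ht
    exact hn'' t (interior_subset ht)
  have hn'0 : deriv n 0 < 0 := by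
    have h1 : deriv n 0 < deriv n (1/2) :=
      hdnmono ⟨le_refl 0, zero_le_one⟩ ⟨by norm_num, by norm_num⟩ (by norm_num)
    have h2 : deriv n (1/2) < 0 := hn' (1/2) ⟨by norm_num, by norm_num⟩
    linarith
  have hn'neg : ∀ x ∈ Ico (0:ℝ) 1, deriv n x < 0 := by
    intro x hx
    rcases eq_or_lt_of_le hx.1 with h | h
    · rw [← h]; exact hn'0
    · exact hn' x ⟨h, hx.2⟩
  obtain ⟨ε, hεpos, hεball⟩ : ∃ ε > 0, ∀ y : ℝ, dist y 0 < ε → 0 < n y ∧ deriv n y < 0 := by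
    have h1 : ∀ᶠ y in 𝓝 (0:ℝ), 0 < n y :=
      (hncont.tendsto 0).eventually (eventually_gt_nhds (hnpos 0 ⟨le_refl 0, zero_le_one⟩))
    have h2 : ∀ᶠ y in 𝓝 (0:ℝ), deriv n y < 0 :=
      (hdncont.tendsto 0).eventually (eventually_lt_nhds hn'0)
    exact Metric.eventually_nhds_iff.mp (h1.and h2)
  have hgood : ∀ x ∈ Ioo (-ε) 1, 0 < n x ∧ deriv n x < 0 := by
    intro x hx
    rcases lt_or_ge x 0 with h | h
    · refine hεball x ?_
      rw [Real.dist_eq, sub_zero, abs_of_neg h]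
      linarith [hx.1]
    · exact ⟨hnpos x ⟨h, hx.2.le⟩, hn'neg x ⟨h, hx.2⟩⟩
  have hnanti : StrictAntiOn n (Ioc (-ε) 1) := by
    apply strictAntiOn_of_deriv_neg (convex_Ioc (-ε) 1) hncont.continuousOn
    intro x hx
    rw [interior_Ioc] at hx
    exact (hgood x hx).2
  have hmem1 : (1:ℝ) ∈ Ioc (-ε) 1 := ⟨by linarith, le_refl 1⟩
  have hn_gt1 : ∀ x ∈ Ioc (-ε) 1, x < 1 → 1 < n x := by
    intro x hx h
    have := hnanti hx hmem1 h
    rwa [hn1] at this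
  have hn_pos' : ∀ x ∈ Ioc (-ε) 1, 0 < n x := by
    intro x hx
    rcases eq_or_lt_of_le hx.2 with h | h
    · rw [h, hn1]; norm_num
    · linarith [hn_gt1 x hx h]
  -- P-side facts
  have hPderiv : ∀ x : ℝ, 0 < n x → HasDerivAt P (Pd x) x := by
    intro x hx
    have h1 : HasDerivAt (fun y => n y ^ (-(γ - 1)))
        (-(γ - 1) * n x ^ (-(γ - 1) - 1) * deriv n x) x := by
      have h := (Real.hasDerivAt_rpow_const (x := n x) (p := -(γ - 1))
        (Or.inl hx.ne')).comp x (hndiff x).hasDerivAt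
      simpa [Function.comp_def] using h
    rw [hPddef]
    exact h1.const_mul c₁
  have hPcontAt : ∀ x : ℝ, 0 < n x → ContinuousAt P x := by
    intro x hx
    rw [hPdef]
    exact continuousAt_const.mul
      ((Real.continuousAt_rpow_const (n x) _ (Or.inl hx.ne')).comp hncont.continuousAt)
  have hP1 : P 1 = c₁ := by rw [hPdef]; show c₁ * n 1 ^ (-(γ-1)) = c₁; rw [hn1, Real.one_rpow, mul_one]
  have hPd1 : Pd 1 = 0 := by rw [hPddef]; show c₁ * (_ * deriv n 1) = 0; rw [hn'1, mul_zero, mul_zero]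
  have hP0 : P 0 = K b₀ := by
    have h0 : 0 < n 0 := hnpos 0 ⟨le_refl 0, zero_le_one⟩
    rw [hPdef]
    show c₁ * n 0 ^ (-(γ-1)) = K b₀
    rw [← hKb₀, mul_assoc, ← Real.rpow_add h0]
    norm_num
  have hPdpos : ∀ x : ℝ, 0 < n x → deriv n x < 0 → 0 < Pd x := by
    intro x h1 h2
    rw [hPddef]
    have hp : 0 < n x ^ (-(γ - 1) - 1) := Real.rpow_pos_of_pos h1 _
    have : 0 < -(γ - 1) * n x ^ (-(γ - 1) - 1) * deriv n x := by
      nlinarith [mul_pos (mul_pos hγ1 hp) (neg_pos.mpr h2)]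
    exact mul_pos hc₁pos this
  have hPmono : StrictMonoOn P (Ioc (-ε) 1) := by
    apply strictMonoOn_of_deriv_pos (convex_Ioc (-ε) 1)
    · exact fun x hx => (hPcontAt x (hn_pos' x hx)).continuousWithinAt
    · intro x hx
      rw [interior_Ioc] at hx
      rw [(hPderiv x (hgood x hx).1).deriv]
      exact hPdpos x (hgood x hx).1 (hgood x hx).2
  have hPlt : ∀ x ∈ Ioc (-ε) 1, x < 1 → P x < c₁ := by
    intro x hx h
    have := hPmono hx hmem1 h
    rwa [hP1] at this
  have hPle : ∀ x ∈ Ioc (-ε) 1, P x ≤ c₁ := by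
    intro x hx
    rcases eq_or_lt_of_le hx.2 with h | h
    · rw [h, hP1]
    · exact (hPlt x hx h).le
  have hPpos : ∀ x ∈ Ioc (-ε) 1, 0 < P x := by
    intro x hx
    exact mul_pos hc₁pos (Real.rpow_pos_of_pos (hn_pos' x hx) _)
  -- the velocity function u
  set u : ℝ → ℝ := fun x => sSup {s : ℝ | s ∈ Icc 0 b₁ ∧ K s ≤ P x} with hudef
  clear_value K c₁ P Kd Pd u
  have huspec : ∀ x ∈ Ioc (-ε) 1, u x ∈ Icc 0 b₁ ∧ K (u x) = P x := by
    intro x hx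
    have hPx := hPpos x hx
    have hPxle := hPle x hx
    have hsub : {s : ℝ | s ∈ Icc 0 b₁ ∧ K s ≤ P x} ⊆ Icc 0 b₁ := fun s hs => hs.1
    have hclosed : IsClosed {s : ℝ | s ∈ Icc 0 b₁ ∧ K s ≤ P x} :=
      IsClosed.inter isClosed_Icc (isClosed_le hKcont continuous_const)
    have hcomp : IsCompact {s : ℝ | s ∈ Icc 0 b₁ ∧ K s ≤ P x} :=
      IsCompact.of_isClosed_subset isCompact_Icc hclosed hsub
    have hne : {s : ℝ | s ∈ Icc 0 b₁ ∧ K s ≤ P x}.Nonempty :=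
      ⟨0, ⟨le_refl 0, hb₁pos.le⟩, by rw [hK0]; exact hPx.le⟩
    have hmem : u x ∈ {s : ℝ | s ∈ Icc 0 b₁ ∧ K s ≤ P x} := by
      rw [hudef]; exact hcomp.sSup_mem hne
    refine ⟨hmem.1, ?_⟩
    have h2 : P x ≤ K b₁ := by rw [hKb₁]; exact hPxle
    obtain ⟨s', hs'mem, hs'⟩ :=
      intermediate_value_Icc hmem.1.2 hKcont.continuousOn ⟨hmem.2, h2⟩
    have hs'S : s' ∈ {s : ℝ | s ∈ Icc 0 b₁ ∧ K s ≤ P x} :=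
      ⟨⟨le_trans hmem.1.1 hs'mem.1, hs'mem.2⟩, hs'.le⟩
    have hle : s' ≤ u x := by rw [hudef]; exact le_csSup hcomp.bddAbove hs'S
    have heq : s' = u x := le_antisymm hle hs'mem.1
    rw [← heq]; exact hs'
  have huniq : ∀ x ∈ Ioc (-ε) 1, ∀ s ∈ Icc 0 b₁, K s = P x → s = u x := by
    intro x hx s hs hKs
    have h := huspec x hx
    exact hKmono.injOn hs h.1 (by rw [hKs, h.2])
  have hmem01 : Icc (0:ℝ) 1 ⊆ Ioc (-ε) 1 := fun x hx => ⟨by linarith [hx.1], hx.2⟩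
  have hmemIoo : Ioo (-ε) (1:ℝ) ⊆ Ioc (-ε) 1 := fun x hx => ⟨hx.1, hx.2.le⟩
  have hu0 : u 0 = b₀ :=
    (huniq 0 (hmem01 ⟨le_refl 0, zero_le_one⟩) b₀ hb₀mem (by rw [hP0])).symm
  have hu1 : u 1 = b₁ :=
    (huniq 1 hmem1 b₁ ⟨hb₁pos.le, le_refl b₁⟩ (by rw [hKb₁, hP1])).symm
  have hult : ∀ x ∈ Ioc (-ε) 1, x < 1 → u x < b₁ := by
    intro x hx h
    have hs := huspec x hx
    rcases lt_or_eq_of_le hs.1.2 with h' | h'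
    · exact h'
    · exfalso
      have h2 := hPlt x hx h
      rw [← hs.2, h', hKb₁] at h2
      exact lt_irrefl _ h2
  have hupos : ∀ x ∈ Ioc (-ε) 1, 0 < u x := by
    intro x hx
    have hs := huspec x hx
    rcases lt_or_eq_of_le hs.1.1 with h' | h'
    · exact h'
    · exfalso
      have h2 := hPpos x hx
      rw [← hs.2, ← h', hK0] at h2
      exact lt_irrefl _ h2
  have hub₀ : ∀ x ∈ Icc (0:ℝ) 1, b₀ ≤ u x := by
    intro x hx
    by_contra h
    push_neg at h
    have hs := huspec x (hmem01 hx)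
    have h2 : K (u x) < K b₀ := hKmono hs.1 hb₀mem h
    rw [hs.2, ← hP0] at h2
    have h3 : P 0 ≤ P x :=
      hPmono.monotoneOn (hmem01 ⟨le_refl 0, zero_le_one⟩) (hmem01 hx) hx.1
    linarith
  -- derivative of u at interior points
  have hud : ∀ x ∈ Ioo (-ε) 1, HasDerivAt u (Pd x / Kd (u x)) x := by
    intro x hx
    have hxJ : x ∈ Ioc (-ε) 1 := hmemIoo hx
    obtain ⟨humem, hKu⟩ := huspec x hxJ
    have hup : 0 < u x := hupos x hxJ
    have hul : u x < b₁ := hult x hxJ hx.2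
    have hKdne : Kd (u x) ≠ 0 := (hKd_pos _ hup hul).ne'
    have hKs : HasStrictDerivAt K (Kd (u x)) (u x) := by
      have h1 : HasStrictDerivAt (fun s : ℝ => s ^ (γ - 1))
          ((γ - 1) * u x ^ (γ - 1 - 1)) (u x) :=
        Real.hasStrictDerivAt_rpow_const_of_ne hup.ne' _
      have h2 : HasStrictDerivAt (fun s : ℝ => c₀ - (γ - 1) / 2 * s ^ 2)
          (-((γ - 1) / 2 * (2 * u x))) (u x) := by
        simpa using ((hasStrictDerivAt_pow 2 (u x)).const_mul ((γ - 1)/2)).const_sub c₀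
      have h := h1.mul h2
      rw [hKdef]
      convert h using 1 <;> try rfl
      have e2 : u x ^ (γ - 1) = u x ^ (γ - 2) * u x := by
        rw [← Real.rpow_add_one hup.ne' (γ - 2), show γ - 2 + 1 = γ - 1 by ring]
      rw [hKddef, show γ - 1 - 1 = γ - 2 by ring, e2, hcsum]
      ring
    have hgd : HasStrictDerivAt (hKs.localInverse K (Kd (u x)) (u x) hKdne)
        (Kd (u x))⁻¹ (P x) := by
      have h := hKs.to_localInverse (hf' := hKdne)
      rwa [hKu] at h
    have hglK : hKs.localInverse K (Kd (u x)) (u x) hKdne (P x) = u x := by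
      have h := (hKs.hasStrictFDerivAt_equiv hKdne).localInverse_apply_image
      rwa [hKu] at h
    have hrt : ∀ᶠ y in 𝓝 (P x),
        K (hKs.localInverse K (Kd (u x)) (u x) hKdne y) = y := by
      have h := (hKs.hasStrictFDerivAt_equiv hKdne).eventually_right_inverse
      rwa [hKu] at h
    have hPc : ContinuousAt P x := hPcontAt x (hgood x hx).1
    have hev : ∀ᶠ y in 𝓝 x, u y = hKs.localInverse K (Kd (u x)) (u x) hKdne (P y) := by
      have h1 : ∀ᶠ y in 𝓝 x,
          K (hKs.localInverse K (Kd (u x)) (u x) hKdne (P y)) = P y :=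
        hPc.eventually hrt
      have h2 : ∀ᶠ y in 𝓝 x,
          hKs.localInverse K (Kd (u x)) (u x) hKdne (P y) ∈ Ioo 0 b₁ := by
        have hc : ContinuousAt (fun y => hKs.localInverse K (Kd (u x)) (u x) hKdne (P y)) x :=
          ((HasStrictDerivAt.hasDerivAt hgd).differentiableAt.continuousAt).comp hPc
        apply hc.eventually_mem
        rw [hglK]
        exact isOpen_Ioo.mem_nhds ⟨hup, hul⟩
      have h3 : ∀ᶠ y in 𝓝 x, y ∈ Ioo (-ε) (1:ℝ) :=
        eventually_of_mem (isOpen_Ioo.mem_nhds hx) (fun y hy => hy)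
      filter_upwards [h1, h2, h3] with y h1y h2y h3y
      exact (huniq y (hmemIoo h3y) _ (Ioo_subset_Icc_self h2y) h1y).symm
    have hgP : HasDerivAt (fun y => hKs.localInverse K (Kd (u x)) (u x) hKdne (P y))
        ((Kd (u x))⁻¹ * Pd x) x :=
      (HasStrictDerivAt.hasDerivAt hgd).comp x (hPderiv x (hgood x hx).1)
    have := hgP.congr_of_eventuallyEq hev
    rwa [inv_mul_eq_div] at this
  have hucont : ∀ x ∈ Ioo (-ε) (1:ℝ), ContinuousAt u x :=
    fun x hx => (hud x hx).differentiableAt.continuousAt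
  have hIoo : Ioo (0:ℝ) 1 ∈ 𝓝[<] (1:ℝ) :=
    Ioo_mem_nhdsLT_of_mem ⟨zero_lt_one, le_refl 1⟩
  have hIooJ : ∀ x ∈ Ioo (0:ℝ) 1, x ∈ Ioo (-ε) (1:ℝ) :=
    fun x hx => ⟨by linarith [hx.1], hx.2⟩
  have hPt : Tendsto P (𝓝[<] (1:ℝ)) (𝓝 c₁) := by
    have h : Tendsto P (𝓝[<] (1:ℝ)) (𝓝 (P 1)) :=
      ((hPcontAt 1 (by rw [hn1]; norm_num)).tendsto).mono_left nhdsWithin_le_nhds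
    rwa [hP1] at h
  have htendu : Tendsto u (𝓝[<] (1:ℝ)) (𝓝 b₁) := by
    refine tendsto_order.2 ⟨?_, ?_⟩
    · intro b hb
      rcases le_or_gt 0 b with h0b | h0b
      · have hKb : K b < c₁ := by
          rw [← hKb₁]
          exact hKmono ⟨h0b, hb.le⟩ ⟨hb₁pos.le, le_refl _⟩ hb
        have hev2 : ∀ᶠ x in 𝓝[<] (1:ℝ), K b < P x := hPt.eventually (eventually_gt_nhds hKb)
        filter_upwards [hev2, hIoo] with x h1 h2
        by_contra h
        push_neg at h
        have hxJ : x ∈ Ioc (-ε) 1 := hmemIoo (hIooJ x h2)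
        have hs := huspec x hxJ
        have : K (u x) ≤ K b := hKmono.monotoneOn hs.1 ⟨h0b, hb.le⟩ h
        rw [hs.2] at this
        linarith
      · filter_upwards [hIoo] with x h2
        exact lt_trans h0b (hupos x (hmemIoo (hIooJ x h2)))
    · intro b hb
      filter_upwards [hIoo] with x h2
      exact lt_of_le_of_lt (huspec x (hmemIoo (hIooJ x h2))).1.2 hb
  set A : ℝ := c₁ * (γ - 1) * deriv (deriv n) 1 with hAdef
  set B : ℝ := (γ - 1) * (γ + 1) * b₁ ^ (γ - 1) with hBdef
  have hA : 0 < A := by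
    rw [hAdef]
    have := hn'' 1 ⟨zero_le_one, le_refl 1⟩
    positivity
  have hB : 0 < B := by
    rw [hBdef]
    have : 0 < b₁ ^ (γ - 1) := Real.rpow_pos_of_pos hb₁pos _
    positivity
  set L : ℝ := Real.sqrt (A / B) with hLdef
  clear_value A B L
  have hL : 0 < L := by rw [hLdef]; exact Real.sqrt_pos.mpr (div_pos hA hB)
  -- T1 : slope of Pd at 1
  have hPdD : HasDerivAt Pd (-A) 1 := by
    have h1 : HasDerivAt (fun y => n y ^ (-(γ - 1) - 1))
        ((-(γ - 1) - 1) * n 1 ^ (-(γ - 1) - 1 - 1) * deriv n 1) 1 := by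
      have h := (Real.hasDerivAt_rpow_const (x := n 1) (p := -(γ - 1) - 1)
        (Or.inl (by rw [hn1]; norm_num))).comp 1 (hndiff 1).hasDerivAt
      simpa [Function.comp_def] using h
    have h2 : HasDerivAt (deriv n) (deriv (deriv n) 1) 1 := (hdn 1).hasDerivAt
    have h3 := h1.mul h2
    have h5 := h3.const_mul (c₁ * -(γ - 1))
    have h6 : HasDerivAt Pd ((c₁ * -(γ - 1)) *
        (((-(γ - 1) - 1) * n 1 ^ (-(γ - 1) - 1 - 1) * deriv n 1) * deriv n 1 +
          n 1 ^ (-(γ - 1) - 1) * deriv (deriv n) 1)) 1 := by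
      refine h5.congr_of_eventuallyEq (Filter.Eventually.of_forall fun y => ?_)
      rw [hPddef]; simp only [Pi.mul_apply]
      ring
    have heq : (c₁ * -(γ - 1)) *
        (((-(γ - 1) - 1) * n 1 ^ (-(γ - 1) - 1 - 1) * deriv n 1) * deriv n 1 +
          n 1 ^ (-(γ - 1) - 1) * deriv (deriv n) 1) = -A := by
      rw [hn'1, hn1, hAdef]
      simp only [Real.one_rpow]
      ring
    rwa [heq] at h6
  have hT1 : Tendsto (fun x => Pd x / (x - 1)) (𝓝[<] (1:ℝ)) (𝓝 (-A)) := by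
    have h := hasDerivAt_iff_tendsto_slope.mp hPdD
    have h2 := h.mono_left (nhdsWithin_mono 1 (fun y (hy : y ∈ Iio 1) => ne_of_lt hy))
    refine h2.congr fun y => ?_
    rw [slope_def_field, hPd1, sub_zero]
  -- T3 : slope of Kd at b₁
  have hKdb₁ : Kd b₁ = 0 := by rw [hKddef]; show _ * (b₁ ^ 2 - b₁ ^ 2) = 0; rw [sub_self, mul_zero]
  have hKdD : HasDerivAt Kd (-B) b₁ := by
    have h1 : HasDerivAt (fun s : ℝ => s ^ (γ - 2)) ((γ - 2) * b₁ ^ (γ - 2 - 1)) b₁ :=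
      Real.hasDerivAt_rpow_const (Or.inl hb₁pos.ne')
    have h2 : HasDerivAt (fun s : ℝ => b₁ ^ 2 - s ^ 2) (-(2 * b₁)) b₁ := by
      simpa using (hasDerivAt_pow 2 b₁).const_sub (b₁ ^ 2)
    have h3 := (h1.const_mul ((γ - 1) * (γ + 1) / 2)).mul h2
    have heq : ((γ - 1) * (γ + 1) / 2 * ((γ - 2) * b₁ ^ (γ - 2 - 1))) * (b₁ ^ 2 - b₁ ^ 2) +
        ((γ - 1) * (γ + 1) / 2 * b₁ ^ (γ - 2)) * -(2 * b₁) = -B := by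
      have e : b₁ ^ (γ - 2) * b₁ = b₁ ^ (γ - 1) := by
        rw [← Real.rpow_add_one hb₁pos.ne' (γ - 2), show γ - 2 + 1 = γ - 1 by ring]
      rw [sub_self, mul_zero, zero_add, hBdef]
      linear_combination (-(γ - 1) * (γ + 1)) * e
    rw [hKddef]
    rw [heq] at h3
    exact h3
  have hT3 : Tendsto (fun s => Kd s / (s - b₁)) (𝓝[<] b₁) (𝓝 (-B)) := by
    have h := hasDerivAt_iff_tendsto_slope.mp hKdD
    have h2 := h.mono_left (nhdsWithin_mono b₁ (fun y (hy : y ∈ Iio b₁) => ne_of_lt hy))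
    refine h2.congr fun y => ?_
    rw [slope_def_field, hKdb₁, sub_zero]
  have hT2 : Tendsto u (𝓝[<] (1:ℝ)) (𝓝[<] b₁) := by
    rw [tendsto_nhdsWithin_iff]
    refine ⟨htendu, ?_⟩
    filter_upwards [hIoo] with x hx
    exact hult x (hmemIoo (hIooJ x hx)) hx.2
  -- L'Hopital limits
  have hT4 : Tendsto (fun x => (c₁ - P x) / (1 - x) ^ 2) (𝓝[<] (1:ℝ)) (𝓝 (A / 2)) := by
    have hdiv : Tendsto (fun x => (-Pd x) / (-(2 * (1 - x)))) (𝓝[<] (1:ℝ)) (𝓝 (A / 2)) := by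
      have h := hT1.const_mul (-(1/2) : ℝ)
      rw [show -(1/2 : ℝ) * -A = A / 2 by ring] at h
      refine h.congr' ?_
      filter_upwards [self_mem_nhdsWithin] with x (hx : x ∈ Iio (1:ℝ))
      have h1 : x - 1 ≠ 0 := sub_ne_zero.mpr (ne_of_lt hx)
      have h2 : (2:ℝ) * (1 - x) ≠ 0 := fun hc => h1 (by
        have : (1:ℝ) - x = 0 := by linarith [(mul_eq_zero.mp hc).resolve_left two_ne_zero]
        linarith)
      rw [neg_div_neg_eq, ← mul_div_assoc, div_eq_div_iff h1 h2]
      ring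
    refine HasDerivAt.lhopital_zero_nhdsLT ?_ ?_ ?_ ?_ ?_ hdiv
    · filter_upwards [hIoo] with x hx
      exact (hPderiv x (hgood x (hIooJ x hx)).1).const_sub c₁
    · refine Filter.Eventually.of_forall fun x => ?_
      have h := ((hasDerivAt_id x).const_sub 1).pow 2
      convert h using 1 <;> try rfl
      push_cast
      try simp only [id_eq]
      try ring
    · filter_upwards [self_mem_nhdsWithin] with x (hx : x ∈ Iio (1:ℝ))
      have : -(2 * (1 - x)) < 0 := by nlinarith [hx.out]
      exact ne_of_lt this
    · have h : Tendsto (fun x => c₁ - P x) (𝓝[<] (1:ℝ)) (𝓝 (c₁ - c₁)) :=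
        tendsto_const_nhds.sub hPt
      rwa [sub_self] at h
    · have h : Tendsto (fun x : ℝ => (1 - x) ^ 2) (𝓝[<] (1:ℝ)) (𝓝 ((1 - 1) ^ 2)) :=
        (((continuous_const.sub continuous_id).pow 2).tendsto 1).mono_left nhdsWithin_le_nhds
      simpa using h
  have hT5s : Tendsto (fun s => (c₁ - K s) / (b₁ - s) ^ 2) (𝓝[<] b₁) (𝓝 (B / 2)) := by
    have hIoob : Ioo (0:ℝ) b₁ ∈ 𝓝[<] b₁ := Ioo_mem_nhdsLT_of_mem ⟨hb₁pos, le_refl b₁⟩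
    have hdiv : Tendsto (fun s => (-Kd s) / (-(2 * (b₁ - s)))) (𝓝[<] b₁) (𝓝 (B / 2)) := by
      have h := hT3.const_mul (-(1/2) : ℝ)
      rw [show -(1/2 : ℝ) * -B = B / 2 by ring] at h
      refine h.congr' ?_
      filter_upwards [self_mem_nhdsWithin] with s (hs : s ∈ Iio b₁)
      have h1 : s - b₁ ≠ 0 := sub_ne_zero.mpr (ne_of_lt hs)
      have h2 : (2:ℝ) * (b₁ - s) ≠ 0 := fun hc => h1 (by
        have : b₁ - s = 0 := by linarith [(mul_eq_zero.mp hc).resolve_left two_ne_zero]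
        linarith)
      rw [neg_div_neg_eq, ← mul_div_assoc, div_eq_div_iff h1 h2]
      ring
    refine HasDerivAt.lhopital_zero_nhdsLT ?_ ?_ ?_ ?_ ?_ hdiv
    · filter_upwards [hIoob] with s hs
      exact (hKderiv s hs.1).const_sub c₁
    · refine Filter.Eventually.of_forall fun s => ?_
      have h := ((hasDerivAt_id s).const_sub b₁).pow 2
      convert h using 1 <;> try rfl
      push_cast
      try simp only [id_eq]
      try ring
    · filter_upwards [self_mem_nhdsWithin] with s (hs : s ∈ Iio b₁)
      have : -(2 * (b₁ - s)) < 0 := by nlinarith [hs.out]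
      exact ne_of_lt this
    · have h : Tendsto (fun s => c₁ - K s) (𝓝[<] b₁) (𝓝 (c₁ - K b₁)) :=
        (tendsto_const_nhds.sub ((hKcont.tendsto b₁).mono_left nhdsWithin_le_nhds))
      rwa [hKb₁, sub_self] at h
    · have h : Tendsto (fun s : ℝ => (b₁ - s) ^ 2) (𝓝[<] b₁) (𝓝 ((b₁ - b₁) ^ 2)) :=
        (((continuous_const.sub continuous_id).pow 2).tendsto b₁).mono_left nhdsWithin_le_nhds
      simpa using h
  have hT5 : Tendsto (fun x => (c₁ - K (u x)) / (b₁ - u x) ^ 2) (𝓝[<] (1:ℝ)) (𝓝 (B / 2)) :=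
    hT5s.comp hT2
  have hT6 : Tendsto (fun x => (b₁ - u x) / (1 - x)) (𝓝[<] (1:ℝ)) (𝓝 L) := by
    have h := (hT4.div hT5 (div_pos hB two_pos).ne').sqrt
    rw [show (A / 2) / (B / 2) = A / B by field_simp] at h
    rw [← hLdef] at h
    refine h.congr' ?_
    filter_upwards [hIoo] with x hx
    simp only [Pi.div_apply]
    have hxJ : x ∈ Ioc (-ε) 1 := hmemIoo (hIooJ x hx)
    have hs := huspec x hxJ
    have h1 : u x < b₁ := hult x hxJ hx.2
    have h2 : K (u x) < c₁ := by
      rw [← hKb₁]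
      exact hKmono hs.1 ⟨hb₁pos.le, le_refl _⟩ h1
    have h3 : (1:ℝ) - x ≠ 0 := sub_ne_zero.mpr (ne_of_gt hx.2)
    have h4 : (0:ℝ) < b₁ - u x := by linarith
    have h5 : (0:ℝ) < c₁ - K (u x) := by linarith
    rw [← hs.2]
    have e : (c₁ - K (u x)) / (1 - x) ^ 2 / ((c₁ - K (u x)) / (b₁ - u x) ^ 2) =
        ((b₁ - u x) / (1 - x)) ^ 2 := by
      field_simp
      try ring
    rw [e, Real.sqrt_sq (div_nonneg h4.le (by linarith [hx.2] : (0:ℝ) ≤ 1 - x))]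
  have hT7 : Tendsto (fun x => Pd x / Kd (u x)) (𝓝[<] (1:ℝ)) (𝓝 L) := by
    have h2 : Tendsto (fun x => ((b₁ - u x) / (1 - x))⁻¹) (𝓝[<] (1:ℝ)) (𝓝 L⁻¹) :=
      hT6.inv₀ hL.ne'
    have h3 : Tendsto (fun x => Kd (u x) / (u x - b₁)) (𝓝[<] (1:ℝ)) (𝓝 (-B)) :=
      hT3.comp hT2
    have h4 : Tendsto (fun x => (Kd (u x) / (u x - b₁))⁻¹) (𝓝[<] (1:ℝ)) (𝓝 (-B)⁻¹) :=
      h3.inv₀ (by simpa using hB.ne')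
    have h := (hT1.mul h2).mul h4
    have hLsq : L ^ 2 = A / B := by rw [hLdef]; exact Real.sq_sqrt (div_pos hA hB).le
    have hAeq : A = L ^ 2 * B := by
      rw [hLsq]
      field_simp
    have hval : -A * L⁻¹ * (-B)⁻¹ = L := by
      rw [hAeq]
      field_simp
      try ring
    rw [hval] at h
    refine h.congr' ?_
    filter_upwards [hIoo] with x hx
    have hxJ : x ∈ Ioc (-ε) 1 := hmemIoo (hIooJ x hx)
    have h1 : u x < b₁ := hult x hxJ hx.2
    have hup : 0 < u x := hupos x hxJ
    have hKdp : 0 < Kd (u x) := hKd_pos _ hup h1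
    have e1 : x - 1 ≠ 0 := sub_ne_zero.mpr (ne_of_lt hx.2)
    have e2 : b₁ - u x ≠ 0 := sub_ne_zero.mpr (ne_of_gt h1)
    have e3 : u x - b₁ ≠ 0 := sub_ne_zero.mpr (ne_of_lt h1)
    field_simp
    ring
  -- derivative at the sonic endpoint
  have hderiv1 : HasDerivWithinAt u L (Icc 0 1) 1 := by
    have hdiff : DifferentiableOn ℝ u (Ioo 0 1) := fun y hy =>
      ((hud y (hIooJ y hy)).differentiableAt).differentiableWithinAt
    have hcont : ContinuousWithinAt u (Ioo 0 1) 1 := by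
      show Tendsto u (𝓝[Ioo (0:ℝ) 1] 1) (𝓝 (u 1))
      rw [hu1]
      exact htendu.mono_left (nhdsWithin_mono 1 Ioo_subset_Iio_self)
    have hlim : Tendsto (fun x => deriv u x) (𝓝[<] (1:ℝ)) (𝓝 L) := by
      refine hT7.congr' ?_
      filter_upwards [hIoo] with x hx
      exact ((hud x (hIooJ x hx)).deriv).symm
    exact (hasDerivWithinAt_Iic_of_tendsto_deriv hdiff hcont hIoo hlim).mono Icc_subset_Iic_self
  -- packaged derivative function
  set D : ℝ → ℝ := fun x => if x = 1 then L else Pd x / Kd (u x) with hDdef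
  clear_value D
  have hDW : ∀ x ∈ Icc (0:ℝ) 1, HasDerivWithinAt u (D x) (Icc 0 1) x := by
    intro x hx
    rcases eq_or_lt_of_le hx.2 with h1 | h1
    · rw [hDdef]
      simp only [h1, if_pos]
      exact hderiv1
    · have hne : D x = Pd x / Kd (u x) := by rw [hDdef]; simp only [if_neg (ne_of_lt h1)]
      rw [hne]
      exact ((hud x ⟨by linarith [hx.1], h1⟩).hasDerivWithinAt)
  have hdw : ∀ x ∈ Icc (0:ℝ) 1, derivWithin u (Icc 0 1) x = D x :=
    fun x hx => (hDW x hx).derivWithin (uniqueDiffOn_Icc one_pos x hx)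
  have hDpos : ∀ x ∈ Icc (0:ℝ) 1, 0 < D x := by
    intro x hx
    rcases eq_or_lt_of_le hx.2 with h1 | h1
    · rw [hDdef]; simp only [h1, if_pos]; exact hL
    · have hne : D x = Pd x / Kd (u x) := by rw [hDdef]; simp only [if_neg (ne_of_lt h1)]
      rw [hne]
      have hxI : x ∈ Ioo (-ε) (1:ℝ) := ⟨by linarith [hx.1], h1⟩
      have hxJ : x ∈ Ioc (-ε) 1 := hmemIoo hxI
      exact div_pos (hPdpos x (hgood x hxI).1 (hgood x hxI).2)
        (hKd_pos _ (hupos x hxJ) (hult x hxJ h1))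
  have hDcont : ContinuousOn D (Icc 0 1) := by
    intro x hx
    rcases eq_or_lt_of_le hx.2 with h1 | h1
    · have hlt : Tendsto D (𝓝[<] (1:ℝ)) (𝓝 L) := by
        refine hT7.congr' ?_
        filter_upwards [self_mem_nhdsWithin] with y hy
        rw [hDdef]
        simp only [if_neg (ne_of_lt (Set.mem_Iio.mp hy))]
      have hD1 : D 1 = L := by rw [hDdef]; simp
      have hwithin : ContinuousWithinAt D (Iio (1:ℝ)) 1 := by
        show Tendsto D (𝓝[Iio (1:ℝ)] 1) (𝓝 (D 1))
        rw [hD1]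
        exact hlt
      have hsing : ContinuousWithinAt D {(1:ℝ)} 1 := continuousWithinAt_singleton
      have hcw : ContinuousWithinAt D (Icc (0:ℝ) 1) 1 := by
        refine (hwithin.union hsing).mono fun y hy => ?_
        rcases lt_or_eq_of_le hy.2 with h | h
        · exact Or.inl h
        · exact Or.inr (by rw [h]; exact rfl)
      rw [h1]
      exact hcw
    · have hxI : x ∈ Ioo (-ε) (1:ℝ) := ⟨by linarith [hx.1], h1⟩
      have hxJ : x ∈ Ioc (-ε) 1 := hmemIoo hxI
      have hcu : ContinuousAt u x := hucont x hxI
      have hrp : ContinuousAt (fun y => n y ^ (-(γ - 1) - 1)) x :=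
        (Real.continuousAt_rpow_const (n x) _ (Or.inl (hgood x hxI).1.ne')).comp
          hncont.continuousAt
      have hcPd : ContinuousAt Pd x := by
        rw [hPddef]
        exact continuousAt_const.mul
          ((continuousAt_const.mul hrp).mul hdncont.continuousAt)
      have hcKd0 : ContinuousAt Kd (u x) := by
        rw [hKddef]
        exact (continuousAt_const.mul
          (Real.continuousAt_rpow_const (u x) _ (Or.inl (hupos x hxJ).ne'))).mul
          ((continuous_const.sub (continuous_pow 2)).continuousAt)
      have hcKd : ContinuousAt (fun y => Kd (u y)) x := hcKd0.comp hcu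
      have hratio : ContinuousAt (fun y => Pd y / Kd (u y)) x :=
        hcPd.div hcKd (hKd_pos _ (hupos x hxJ) (hult x hxJ h1)).ne'
      have hev : (fun y => Pd y / Kd (u y)) =ᶠ[𝓝 x] D := by
        filter_upwards [Iio_mem_nhds h1] with y hy
        rw [hDdef]
        simp only [if_neg (ne_of_lt (Set.mem_Iio.mp hy))]
      exact ((hratio.congr hev).continuousWithinAt)
  -- constant flux value
  have hflux : ∀ x ∈ Icc (0:ℝ) 1, n x * ρ (u x) * u x = (c₁ / γ) ^ (1 / (γ - 1)) := by
    intro x hx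
    have hxJ := hmem01 hx
    obtain ⟨⟨hs0, hsb⟩, hKu⟩ := huspec x hxJ
    have hsp : 0 < u x := hupos x hxJ
    have hnx : 0 < n x := hn_pos' x hxJ
    rw [hρ (u x) hs0 hsb]
    have hsq : u x ^ 2 ≤ b₁ ^ 2 := by nlinarith
    have hcs : 0 < c₀ - (γ - 1) / 2 * u x ^ 2 := by nlinarith
    have key : (n x * ((c₀ - (γ - 1) / 2 * u x ^ 2) / γ) ^ (1 / (γ - 1)) * u x) ^ (γ - 1)
        = ((c₁ / γ) ^ (1 / (γ - 1))) ^ (γ - 1) := by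
      rw [Real.mul_rpow (by positivity) hs0, Real.mul_rpow hnx.le (by positivity)]
      rw [one_div, Real.rpow_inv_rpow (by positivity) hγne,
        Real.rpow_inv_rpow (by positivity) hγne]
      have h1 : u x ^ (γ - 1) * (c₀ - (γ - 1) / 2 * u x ^ 2) = c₁ * n x ^ (-(γ - 1)) := by
        have h := hKu
        rw [hKdef, hPdef] at h
        exact h
      have h2 : n x ^ (-(γ - 1)) = (n x ^ (γ - 1))⁻¹ := Real.rpow_neg hnx.le _
      have h3 : n x ^ (γ - 1) ≠ 0 := (Real.rpow_pos_of_pos hnx _).ne'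
      have h4 : u x ^ (γ - 1) * (c₀ - (γ - 1) / 2 * u x ^ 2) * n x ^ (γ - 1) = c₁ := by
        rw [h1, h2]
        field_simp
      linear_combination (1 / γ) * h4
    have e1 : 0 ≤ n x * ((c₀ - (γ - 1) / 2 * u x ^ 2) / γ) ^ (1 / (γ - 1)) * u x := by positivity
    have e2 : (0:ℝ) ≤ (c₁ / γ) ^ (1 / (γ - 1)) := by positivity
    rw [← Real.rpow_rpow_inv e1 hγne, key, Real.rpow_rpow_inv e2 hγne]
  refine ⟨u, ?_, hu0, hu1, ?_, ?_, ?_, ?_⟩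
  · rw [show (1 : WithTop ℕ∞) = 0 + 1 from (zero_add 1).symm,
      contDiffOn_succ_iff_derivWithin (uniqueDiffOn_Icc one_pos)]
    refine ⟨fun x hx => (hDW x hx).differentiableWithinAt, by simp, ?_⟩
    rw [contDiffOn_zero]
    exact hDcont.congr hdw
  · intro x hx
    rw [← hu0, hflux x hx]
    exact (hflux 0 ⟨le_refl 0, zero_le_one⟩).symm
  · intro x hx
    rw [hdw x hx]
    exact hDpos x hx
  · intro x hx
    have hxJ := hmem01 ⟨hx.1, hx.2.le⟩
    have h1 : u x < b₁ := hult x hxJ hx.2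
    have h0 : 0 < u x := hupos x hxJ
    have h2 : u x ^ 2 < b₁ ^ 2 := by nlinarith
    nlinarith [hsonic]
  · rw [hu1]
    linarith [hsonic]
end
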